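/- arXiv:2407.03343 — 2 statements merged into one kernel-verified Lean document; each statement's English description precedes it below -/
import Mathlib

section
/- Let two unit spheres have centers c⁽¹⁾ and c⁽²⁾ with ‖c⁽²⁾ − c⁽¹⁾‖ = 2 + δ for δ > 0. Then the points x_acc⁽¹⁾ = (c⁽¹⁾+c⁽²⁾)/2 − √(δ + δ²/4)·e and x_acc⁽²⁾ = (c⁽¹⁾+c⁽²⁾)/2 + √(δ + δ²/4)·e, where e = (c⁽²⁾−c⁽¹⁾)/‖c⁽²⁾−c⁽¹⁾‖, satisfy the fixed-point relations: x_acc⁽¹⁾ is the reflection of x_acc⁽²⁾ in the sphere centered at c⁽¹⁾, and x_acc⁽²⁾ is the reflection of x_acc⁽¹⁾ in the sphere centered at c⁽²⁾. -/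
/-- For two unit spheres with centers at distance `2 + δ`, the accumulation points
`x_acc⁽¹⁾, x_acc⁽²⁾` satisfy the mutual fixed-point (reflection) relations. -/
theorem accumulation_points_fixed_point
    (c₁ c₂ : EuclideanSpace ℝ (Fin 3)) (δ : ℝ) (hδ : 0 < δ)
    (hdist : ‖c₂ - c₁‖ = 2 + δ)
    (e x₁ x₂ : EuclideanSpace ℝ (Fin 3))
    (he : e = ‖c₂ - c₁‖⁻¹ • (c₂ - c₁))
    (hx₁ : x₁ = (2:ℝ)⁻¹ • (c₁ + c₂) - Real.sqrt (δ + δ ^ 2 / 4) • e)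
    (hx₂ : x₂ = (2:ℝ)⁻¹ • (c₁ + c₂) + Real.sqrt (δ + δ ^ 2 / 4) • e) :
    x₁ = c₁ + (‖x₂ - c₁‖ ^ 2)⁻¹ • (x₂ - c₁) ∧
    x₂ = c₂ + (‖x₁ - c₂‖ ^ 2)⁻¹ • (x₁ - c₂) := by
  set s := Real.sqrt (δ + δ ^ 2 / 4) with hs
  have hdpos : (0:ℝ) < 2 + δ := by linarith
  have hs0 : 0 ≤ s := Real.sqrt_nonneg _
  have hs2 : s ^ 2 = δ + δ ^ 2 / 4 := Real.sq_sqrt (by nlinarith)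
  have hs_lt : s < 1 + δ / 2 := by nlinarith
  have hkey : (1 + δ / 2 - s) * (1 + δ / 2 + s) = 1 := by nlinarith
  have hnorm_e : ‖e‖ = 1 := by
    rw [he, norm_smul, hdist, norm_inv, Real.norm_eq_abs, abs_of_pos hdpos]
    field_simp
  have hc2 : c₂ = c₁ + (2 + δ) • e := by
    rw [he, hdist, smul_smul, mul_inv_cancel₀ (ne_of_gt hdpos), one_smul]
    abel
  have h21 : x₂ - c₁ = (1 + δ / 2 + s) • e := by
    rw [hx₂, hc2]; module
  have h12 : x₁ - c₂ = (-(1 + δ / 2 + s)) • e := by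
    rw [hx₁, hc2]; module
  have hpos : (0:ℝ) < 1 + δ / 2 + s := by linarith
  have hn21 : ‖x₂ - c₁‖ = 1 + δ / 2 + s := by
    rw [h21, norm_smul, hnorm_e, Real.norm_eq_abs, abs_of_pos hpos, mul_one]
  have hn12 : ‖x₁ - c₂‖ = 1 + δ / 2 + s := by
    rw [h12, norm_smul, hnorm_e, Real.norm_eq_abs, abs_neg, abs_of_pos hpos, mul_one]
  have hinv : ((1 + δ / 2 + s) ^ 2)⁻¹ * (1 + δ / 2 + s) = 1 + δ / 2 - s := by
    field_simp
    nlinarith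
  constructor
  · rw [hn21, h21, smul_smul, hinv, hx₁, hc2]; module
  · rw [hn12, h12, smul_smul, mul_neg, hinv, hx₂, hc2]; module
end

section
/- Each term of Brenner's series, a_n(α) = [n(n+1)/((2n−1)(2n+3))]·[ (4cosh²((n+1/2)α) + (2n+1)² sinh²α) / (2 sinh((2n+1)α) − (2n+1) sinh(2α)) − 1 ], is nonnegative for every n ≥ 1 and α > 0. -/
lemma sinh_nat_mul_ge (k : ℕ) (x : ℝ) (hx : 0 ≤ x) :
    (k : ℝ) * Real.sinh x ≤ Real.sinh (k * x) := by
  induction k with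
  | zero => simp
  | succ k ih =>
    have h1 : Real.sinh (((k : ℝ) + 1) * x) =
        Real.sinh ((k : ℝ) * x) * Real.cosh x + Real.cosh ((k : ℝ) * x) * Real.sinh x := by
      rw [← Real.sinh_add]; ring_nf
    push_cast
    rw [h1]
    have hs : 0 ≤ Real.sinh ((k : ℝ) * x) :=
      Real.sinh_nonneg_iff.mpr (by positivity)
    have hsx : 0 ≤ Real.sinh x := Real.sinh_nonneg_iff.mpr hx
    nlinarith [Real.one_le_cosh x, Real.one_le_cosh ((k : ℝ) * x)]

/-- Each term of Brenner's series is nonnegative for `n ≥ 1` and `α > 0`. -/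
theorem brenner_term_nonneg (n : ℕ) (hn : 1 ≤ n) (α : ℝ) (hα : 0 < α) :
    0 ≤ ((n : ℝ) * (n + 1) / ((2 * n - 1) * (2 * n + 3))) *
      ((4 * Real.cosh (((n : ℝ) + 1 / 2) * α) ^ 2
          + (2 * (n : ℝ) + 1) ^ 2 * Real.sinh α ^ 2) /
        (2 * Real.sinh ((2 * (n : ℝ) + 1) * α)
          - (2 * (n : ℝ) + 1) * Real.sinh (2 * α)) - 1) := by
  have hn1 : (1 : ℝ) ≤ (n : ℝ) := by exact_mod_cast hn
  -- denominator positive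
  have hsplit : Real.sinh ((2 * (n : ℝ) + 1) * α) =
      Real.sinh ((2 * n : ℕ) * α) * Real.cosh α + Real.cosh ((2 * n : ℕ) * α) * Real.sinh α := by
    rw [← Real.sinh_add]; push_cast; ring_nf
  have hkey := sinh_nat_mul_ge (2 * n) α hα.le
  have hcosh' : Real.cosh α < Real.cosh (2 * (n:ℝ) * α) := by
    rw [Real.cosh_lt_cosh, abs_of_pos hα, abs_of_pos (by positivity)]
    nlinarith
  have hcosh : Real.cosh α < Real.cosh (((2 * n : ℕ) : ℝ) * α) := by
    rw [Real.cosh_lt_cosh]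
    rw [abs_of_pos hα, abs_of_pos (by positivity : (0:ℝ) < ((2 * n : ℕ) : ℝ) * α)]
    push_cast
    nlinarith
  have hsinh2 : Real.sinh (2 * α) = 2 * Real.sinh α * Real.cosh α := Real.sinh_two_mul α
  have hsα : 0 < Real.sinh α := Real.sinh_pos_iff.mpr hα
  have hcα : 1 ≤ Real.cosh α := Real.one_le_cosh α
  have hD : 0 < 2 * Real.sinh ((2 * (n : ℝ) + 1) * α)
      - (2 * (n : ℝ) + 1) * Real.sinh (2 * α) := by
    rw [hsplit, hsinh2]
    push_cast at hkey ⊢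
    nlinarith [mul_pos hsα (sub_pos.mpr hcosh'), mul_nonneg (le_trans zero_le_one hcα) (sub_nonneg.mpr hkey)]
  -- numerator ≥ denominator
  have hdouble : Real.cosh ((2 * (n : ℝ) + 1) * α) =
      2 * Real.cosh (((n : ℝ) + 1 / 2) * α) ^ 2 - 1 := by
    rw [show (2 * (n : ℝ) + 1) * α = 2 * (((n : ℝ) + 1 / 2) * α) by ring, Real.cosh_two_mul]
    nlinarith [Real.cosh_sq (((n : ℝ) + 1 / 2) * α)]
  have hsc : Real.sinh ((2 * (n : ℝ) + 1) * α) < Real.cosh ((2 * (n : ℝ) + 1) * α) :=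
    Real.sinh_lt_cosh _
  have hs2 : 0 < Real.sinh (2 * α) := Real.sinh_pos_iff.mpr (by linarith)
  have hND : 2 * Real.sinh ((2 * (n : ℝ) + 1) * α) - (2 * (n : ℝ) + 1) * Real.sinh (2 * α)
      ≤ 4 * Real.cosh (((n : ℝ) + 1 / 2) * α) ^ 2 + (2 * (n : ℝ) + 1) ^ 2 * Real.sinh α ^ 2 := by
    have h1 : 0 < (2 * (n:ℝ) + 1) * Real.sinh (2 * α) :=
      mul_pos (by linarith) hs2
    have h2 : 0 ≤ (2 * (n:ℝ) + 1) ^ 2 * Real.sinh α ^ 2 := by positivity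
    linarith
  have hfrac : (1 : ℝ) ≤ (4 * Real.cosh (((n : ℝ) + 1 / 2) * α) ^ 2
      + (2 * (n : ℝ) + 1) ^ 2 * Real.sinh α ^ 2) /
      (2 * Real.sinh ((2 * (n : ℝ) + 1) * α) - (2 * (n : ℝ) + 1) * Real.sinh (2 * α)) :=
    (one_le_div hD).mpr hND
  have hpre : 0 ≤ (n : ℝ) * (n + 1) / ((2 * n - 1) * (2 * n + 3)) := by
    apply div_nonneg <;> nlinarith
  exact mul_nonneg hpre (by linarith)
end
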